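/- For the unitary Hessenberg matrix H(α₀,…,α_{n-1}) with |α_j| < 1 for j < n-1 and |α_{n-1}| ≤ 1, having eigenvalues λ₁,…,λₙ on the unit circle and q_j the modulus of the first component of the j-th normalized eigenvector, one has ∏_{1≤i<j≤n} |λ_i - λ_j|² = ∏_{l=0}^{n-2} (1 - |α_l|²)^{n-1-l} / ∏_{j=1}^n q_j². -/

import Mathlib

open Finset

/-- The unitary upper Hessenberg matrix parametrized by the Verblunsky
coefficients `α 0, …, α (n-1)`, with `α₋₁ = -1` and
`ρ j = √(1 - |α j|²)`:  `H i i = -α_{i-1} conj(α i)`, `H (i+1) i = ρ i`,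
`H i j = -α_{i-1} conj(α j) ∏_{l=i}^{j-1} ρ l` for `i < j`, and `0` below the
subdiagonal. -/
noncomputable def hessenbergU (n : ℕ) (α : ℕ → ℂ) : Matrix (Fin n) (Fin n) ℂ :=
  let A : ℕ → ℂ := fun i => if i = 0 then -1 else α (i - 1)
  let ρ : ℕ → ℂ := fun j => (Real.sqrt (1 - ‖α j‖ ^ 2) : ℝ)
  Matrix.of fun i j =>
    if (i : ℕ) = (j : ℕ) then -A i * starRingEnd ℂ (α i)
    else if (j : ℕ) + 1 = (i : ℕ) then ρ j
    else if (i : ℕ) < (j : ℕ) then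
      -A i * starRingEnd ℂ (α j) * ∏ l ∈ Ico (i : ℕ) (j : ℕ), ρ l
    else 0

/-!
Let `K` be the Krylov matrix whose `m`-th column is `H ^ m e₀`. Since `H` is upper Hessenberg
with subdiagonal `ρ₀, …, ρ_{n-2}`, `K` is upper triangular with diagonal entries
`ρ₀ ⋯ ρ_{m-1}`, so `det K = ∏_l ρ_l ^ (n-1-l)`. On the other hand `H` is unitary, so its
normalized eigenvectors for the distinct eigenvalues `λ_k` are the columns of a unitary
matrix `V`, and `H ^ m = V diag(λ ^ m) Vᴴ` gives `K = V · diag(conj V₀ₖ) · Vandermonde(λ)`.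
Hence `|det K| = ∏ q_k · ∏_{i<j} |λ_i - λ_j|`, and squaring gives the formula.
-/

open Matrix ComplexConjugate

section Eigenvectors

variable {m R : Type*} [Fintype m] [DecidableEq m] [CommRing R]

lemma mul_transpose_eq_transpose_mul_diagonal {H : Matrix m m R} {v : m → m → R}
    {d : m → R} (hv : ∀ k, H *ᵥ v k = d k • v k) :
    H * (of v)ᵀ = (of v)ᵀ * diagonal d := by
  ext i k
  rw [mul_diagonal, mul_apply]
  exact (congrFun (hv k) i).trans (mul_comm _ _)

variable [StarRing R]

lemma transpose_mem_unitaryGroup {v : m → m → R}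
    (hv : ∀ k k', star (v k) ⬝ᵥ v k' = (1 : Matrix m m R) k k') :
    (of v)ᵀ ∈ unitaryGroup m R := by
  rw [mem_unitaryGroup_iff']
  ext k k'
  exact hv k k'

lemma star_dotProduct_eq_zero_of_mulVec_eq_smul [NoZeroDivisors R] {U : Matrix m m R}
    (hU : U ∈ unitaryGroup m R) {a b : R} {v w : m → R} (ha : star a * a = 1)
    (hv : U *ᵥ v = a • v) (hw : U *ᵥ w = b • w) (hab : a ≠ b) :
    star v ⬝ᵥ w = 0 := by
  have hpreserve : star (U *ᵥ v) ⬝ᵥ (U *ᵥ w) = star v ⬝ᵥ w := by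
    rw [star_mulVec, dotProduct_mulVec, vecMul_vecMul, ← star_eq_conjTranspose, hU.1, vecMul_one]
  rw [hv, hw, star_smul, smul_dotProduct, dotProduct_smul, smul_smul, smul_eq_mul] at hpreserve
  have hne : star a * b ≠ 1 := fun h => hab (by linear_combination b * ha - a * h)
  exact (mul_eq_zero.mp (by linear_combination hpreserve)).resolve_left (sub_ne_zero.mpr hne)

end Eigenvectors

lemma star_dotProduct_self_eq_sum_norm_sq {m : Type*} [Fintype m] (v : m → ℂ) :
    star v ⬝ᵥ v = ((∑ i, ‖v i‖ ^ 2 : ℝ) : ℂ) := by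
  simp only [dotProduct, Pi.star_apply, Complex.star_def, Complex.conj_mul', Complex.ofReal_sum,
    Complex.ofReal_pow]

lemma transpose_mem_unitaryGroup_of_mulVec_eq_smul {m : Type*} [Fintype m] [DecidableEq m]
    {U : Matrix m m ℂ} (hU : U ∈ unitaryGroup m ℂ) {d : m → ℂ} (hd : ∀ k, ‖d k‖ = 1)
    (hd_inj : Function.Injective d) {v : m → m → ℂ} (hv_norm : ∀ k, ∑ i, ‖v k i‖ ^ 2 = 1)
    (hv : ∀ k, U *ᵥ v k = d k • v k) : (of v)ᵀ ∈ unitaryGroup m ℂ := by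
  refine transpose_mem_unitaryGroup fun k k' => ?_
  rcases eq_or_ne k k' with rfl | hkk'
  · rw [one_apply_eq, star_dotProduct_self_eq_sum_norm_sq, hv_norm, Complex.ofReal_one]
  · have hd_unit : star (d k) * d k = 1 := by
      rw [Complex.star_def, Complex.conj_mul', hd]
      norm_num
    rw [one_apply_ne hkk']
    exact star_dotProduct_eq_zero_of_mulVec_eq_smul hU hd_unit (hv k) (hv k') (hd_inj.ne hkk')

section Krylov

variable {R : Type*} [CommRing R] {n : ℕ}

def krylov (H : Matrix (Fin n) (Fin n) R) (i₀ : Fin n) : Matrix (Fin n) (Fin n) R :=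
  of fun i m => (H ^ (m : ℕ)) i i₀

lemma krylov_eq_mul_diagonal_mul_vandermonde [StarRing R] {H V : Matrix (Fin n) (Fin n) R}
    {d : Fin n → R} (hV : V * Vᴴ = 1) (hHV : H * V = V * diagonal d) (i₀ : Fin n) :
    krylov H i₀ = V * (diagonal (fun k => star (V i₀ k)) * vandermonde d) := by
  have hpow (m : ℕ) : H ^ m = V * diagonal (d ^ m) * Vᴴ := by
    rw [← diagonal_pow, (SemiconjBy.pow_right hHV.symm m).eq, mul_assoc, hV, mul_one]
  ext i m
  rw [krylov, of_apply, hpow, mul_apply, mul_apply]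
  simp only [mul_diagonal, diagonal_mul, vandermonde_apply, conjTranspose_apply, Pi.pow_apply]
  exact sum_congr rfl fun k _ => by ring

lemma norm_det_krylov {H V : Matrix (Fin n) (Fin n) ℂ} {d : Fin n → ℂ}
    (hV : V ∈ unitaryGroup (Fin n) ℂ) (hHV : H * V = V * diagonal d) (i₀ : Fin n) :
    ‖(krylov H i₀).det‖ = (∏ k, ‖V i₀ k‖) * ∏ i, ∏ j ∈ Ioi i, ‖d j - d i‖ := by
  have hdetV : ‖V.det‖ = 1 := CStarRing.norm_of_mem_unitary (det_of_mem_unitary hV)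
  rw [krylov_eq_mul_diagonal_mul_vandermonde hV.2 hHV, det_mul, det_mul, det_diagonal,
    det_vandermonde, norm_mul, norm_mul, hdetV, one_mul]
  simp only [norm_prod, norm_star]

end Krylov

def IsUpperHessenberg {R : Type*} [Zero R] {n : ℕ} (H : Matrix (Fin n) (Fin n) R) : Prop :=
  ∀ i j : Fin n, (j : ℕ) + 1 < i → H i j = 0

lemma prod_range_succ_prod_range {M : Type*} [CommMonoid M] (f : ℕ → M) (N : ℕ) :
    ∏ m ∈ range (N + 1), ∏ l ∈ range m, f l = ∏ l ∈ range N, f l ^ (N - l) := by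
  induction N with
  | zero => simp
  | succ N ih =>
    rw [prod_range_succ, ih, prod_range_succ f, prod_range_succ (fun l => f l ^ (N + 1 - l)),
      Nat.add_sub_cancel_left, pow_one, ← mul_assoc, ← prod_mul_distrib]
    congr 1
    exact prod_congr rfl fun l hl => by
      rw [← pow_succ, show N + 1 - l = N - l + 1 by have := mem_range.mp hl; omega]

namespace IsUpperHessenberg

variable {R : Type*} [CommRing R] {n : ℕ} {H : Matrix (Fin n) (Fin n) R}
  (hH : IsUpperHessenberg H) (hn : 0 < n)
include hH hn

lemma pow_apply_zero_eq_zero {m : ℕ} {i : Fin n} (h : m < i) : (H ^ m) i ⟨0, hn⟩ = 0 := by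
  induction m generalizing i with
  | zero => exact one_apply_ne (fun hi => by simp [hi] at h)
  | succ m ih =>
    rw [pow_succ', mul_apply]
    refine sum_eq_zero fun j _ => ?_
    rcases le_or_gt (j : ℕ) m with hj | hj
    · rw [hH i j (by omega), zero_mul]
    · rw [ih hj, mul_zero]

lemma pow_apply_zero_self {s : ℕ → R} (hs : ∀ i j : Fin n, (j : ℕ) + 1 = i → H i j = s j)
    {m : ℕ} (hm : m < n) : (H ^ m) ⟨m, hm⟩ ⟨0, hn⟩ = ∏ l ∈ range m, s l := by
  induction m with
  | zero => simp
  | succ m ih =>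
    rw [pow_succ', mul_apply, sum_eq_single ⟨m, by omega⟩, ih, hs _ _ rfl, prod_range_succ,
      mul_comm]
    · intro j _ hj
      rcases lt_or_gt_of_ne (Fin.val_ne_of_ne hj) with h | h
      · rw [hH _ j (by simp only at h ⊢; omega), zero_mul]
      · rw [hH.pow_apply_zero_eq_zero hn h, mul_zero]
    · exact fun h => absurd (mem_univ _) h

lemma krylov_isUpperTriangular : (krylov H ⟨0, hn⟩).IsUpperTriangular :=
  fun _ _ h => hH.pow_apply_zero_eq_zero hn h

lemma det_krylov {s : ℕ → R} (hs : ∀ i j : Fin n, (j : ℕ) + 1 = i → H i j = s j) :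
    (krylov H ⟨0, hn⟩).det = ∏ l ∈ range (n - 1), s l ^ (n - 1 - l) := by
  rw [det_of_isUpperTriangular (hH.krylov_isUpperTriangular hn)]
  have hdiag (m : Fin n) : krylov H ⟨0, hn⟩ m m = ∏ l ∈ range m, s l :=
    hH.pow_apply_zero_self hn hs m.2
  rw [prod_congr rfl fun m _ => hdiag m, Fin.prod_univ_eq_prod_range (fun m => ∏ l ∈ range m, s l),
    ← prod_range_succ_prod_range, Nat.sub_add_cancel hn]

end IsUpperHessenberg

namespace hessenbergU

variable (α : ℕ → ℂ)

/-- `prevCoeff α i` is `α_{i-1}`, with the convention `α_{-1} = -1`. -/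
noncomputable def prevCoeff (i : ℕ) : ℂ := if i = 0 then -1 else α (i - 1)

noncomputable def rho (j : ℕ) : ℝ := √(1 - ‖α j‖ ^ 2)

noncomputable def entry (i j : ℕ) : ℂ :=
  if j + 1 = i then (rho α j : ℂ)
  else if i ≤ j then -prevCoeff α i * conj (α j) * ∏ l ∈ Ico i j, (rho α l : ℂ)
  else 0

variable {α}

lemma entry_eq_zero {i j : ℕ} (h : j + 1 < i) : entry α i j = 0 := by
  rw [entry, if_neg (by omega), if_neg (by omega)]

lemma entry_succ_self (j : ℕ) : entry α (j + 1) j = rho α j := if_pos rfl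

lemma entry_of_le {i j : ℕ} (h : i ≤ j) :
    entry α i j = -prevCoeff α i * conj (α j) * ∏ l ∈ Ico i j, (rho α l : ℂ) := by
  rw [entry, if_neg (by omega), if_pos h]

lemma rho_nonneg (α : ℕ → ℂ) (j : ℕ) : 0 ≤ rho α j := Real.sqrt_nonneg _

lemma rho_sq {l : ℕ} (h : ‖α l‖ ≤ 1) : rho α l ^ 2 = 1 - ‖α l‖ ^ 2 :=
  Real.sq_sqrt (by nlinarith [norm_nonneg (α l)])

lemma prod_rho_pow_sq {N : ℕ} (hα : ∀ l < N, ‖α l‖ ≤ 1) :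
    (∏ l ∈ range N, rho α l ^ (N - l)) ^ 2 = ∏ l ∈ range N, (1 - ‖α l‖ ^ 2) ^ (N - l) := by
  rw [← prod_pow]
  refine prod_congr rfl fun l hl => ?_
  rw [← pow_mul, mul_comm, pow_mul, rho_sq (hα l (mem_range.mp hl))]

lemma sum_norm_prevCoeff_sq_mul_prod (j : ℕ) :
    ∑ i ∈ range (j + 1), ‖prevCoeff α i‖ ^ 2 * ∏ l ∈ Ico i j, (1 - ‖α l‖ ^ 2) = 1 := by
  induction j with
  | zero => simp [prevCoeff]
  | succ j ih =>
    have hsplit : ∀ i ∈ range (j + 1), ‖prevCoeff α i‖ ^ 2 * ∏ l ∈ Ico i (j + 1), (1 - ‖α l‖ ^ 2)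
        = ‖prevCoeff α i‖ ^ 2 * (∏ l ∈ Ico i j, (1 - ‖α l‖ ^ 2)) * (1 - ‖α j‖ ^ 2) :=
      fun i hi => by rw [prod_Ico_succ_top (by simpa [Nat.lt_succ_iff] using hi), mul_assoc]
    rw [sum_range_succ, sum_congr rfl hsplit, ← sum_mul, ih, Ico_self, prod_empty, prevCoeff,
      if_neg j.succ_ne_zero, Nat.add_sub_cancel]
    ring

lemma conj_entry_mul_entry {i j j' : ℕ} (hij : i ≤ j) (hjj' : j ≤ j')
    (hα : ∀ l < j, ‖α l‖ ≤ 1) :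
    conj (entry α i j) * entry α i j'
      = ((‖prevCoeff α i‖ ^ 2 * ∏ l ∈ Ico i j, (1 - ‖α l‖ ^ 2) : ℝ) : ℂ)
        * (α j * conj (α j') * ∏ l ∈ Ico j j', (rho α l : ℂ)) := by
  have hrho : (∏ l ∈ Ico i j, (rho α l : ℂ)) * ∏ l ∈ Ico i j, (rho α l : ℂ)
      = ∏ l ∈ Ico i j, (1 - (‖α l‖ : ℂ) ^ 2) := by
    rw [← prod_mul_distrib]
    refine prod_congr rfl fun l hl => ?_
    rw [← Complex.ofReal_mul, ← sq, rho_sq (hα l (mem_Ico.mp hl).2)]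
    push_cast; ring
  rw [entry_of_le hij, entry_of_le (hij.trans hjj'), ← prod_Ico_consecutive _ hij hjj']
  simp only [map_mul, map_neg, map_prod, Complex.conj_conj, Complex.conj_ofReal]
  push_cast
  rw [← hrho, ← Complex.conj_mul']
  ring

lemma sum_conj_entry_mul_entry {j j' : ℕ} (hjj' : j ≤ j') (hα : ∀ l ≤ j, ‖α l‖ ≤ 1) :
    ∑ i ∈ range (j + 2), conj (entry α i j) * entry α i j' = if j = j' then 1 else 0 := by
  have hupper : ∑ i ∈ range (j + 1), conj (entry α i j) * entry α i j'
      = α j * conj (α j') * ∏ l ∈ Ico j j', (rho α l : ℂ) := by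
    rw [sum_congr rfl fun i hi => conj_entry_mul_entry (Nat.lt_succ_iff.mp (mem_range.mp hi))
      hjj' fun l hl => hα l hl.le, ← sum_mul, ← Complex.ofReal_sum,
      sum_norm_prevCoeff_sq_mul_prod, Complex.ofReal_one, one_mul]
  rw [sum_range_succ, hupper, entry_succ_self, Complex.conj_ofReal]
  rcases hjj'.eq_or_lt with rfl | hlt
  · rw [if_pos rfl, Ico_self, prod_empty, entry_succ_self, ← Complex.ofReal_mul, ← sq,
      rho_sq (hα j le_rfl), Complex.mul_conj', Complex.ofReal_sub]
    push_cast; ring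
  · rw [if_neg hlt.ne, entry_of_le (hlt : j + 1 ≤ j'), prod_eq_prod_Ico_succ_bot hlt,
      prevCoeff, if_neg j.succ_ne_zero]
    simp only [Nat.succ_eq_add_one, Nat.add_sub_cancel]
    ring

end hessenbergU

open hessenbergU in
lemma hessenbergU_apply {n : ℕ} (α : ℕ → ℂ) (i j : Fin n) :
    hessenbergU n α i j = entry α i j := by
  rw [hessenbergU, of_apply, entry]
  split_ifs <;> first | omega | rfl | simp_all [prevCoeff, rho]

lemma hessenbergU_isUpperHessenberg (n : ℕ) (α : ℕ → ℂ) : IsUpperHessenberg (hessenbergU n α) :=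
  fun i j h => by rw [hessenbergU_apply, hessenbergU.entry_eq_zero h]

lemma hessenbergU_apply_of_succ_eq {n : ℕ} (α : ℕ → ℂ) (i j : Fin n) (h : (j : ℕ) + 1 = i) :
    hessenbergU n α i j = hessenbergU.rho α j := by
  rw [hessenbergU_apply, ← h, hessenbergU.entry_succ_self]

open hessenbergU in
lemma hessenbergU_mem_unitaryGroup {n : ℕ} {α : ℕ → ℂ} (hα : ∀ l < n, ‖α l‖ ≤ 1)
    (hlast : ‖α (n - 1)‖ = 1) : hessenbergU n α ∈ unitaryGroup (Fin n) ℂ := by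
  rw [mem_unitaryGroup_iff', star_eq_conjTranspose]
  suffices h : ∀ j j' : Fin n, j ≤ j' →
      ((hessenbergU n α)ᴴ * hessenbergU n α) j j' = (1 : Matrix (Fin n) (Fin n) ℂ) j j' by
    ext j j'
    rcases le_total j j' with hjj' | hjj'
    · exact h j j' hjj'
    · rw [← (isHermitian_conjTranspose_mul_self _).apply, h j' j hjj', one_apply, one_apply]
      simp [eq_comm]
  intro j j' hjj'
  set f : ℕ → ℂ := fun i => conj (entry α i j) * entry α i j'
  -- Rows below `j + 1` vanish; for `j = n - 1` the missing row `n` would carry `ρ_{n-1} = 0`.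
  have hcol : ∑ i ∈ range n, f i = ∑ i ∈ range (j + 2), f i := by
    rcases (by omega : (j : ℕ) + 2 ≤ n ∨ (j : ℕ) + 1 = n) with h | h
    · refine (sum_subset (range_subset_range.2 h) fun i hi hi' => ?_).symm
      simp only [mem_range, not_lt] at hi hi'
      simp only [f, entry_eq_zero (by omega : (j : ℕ) + 1 < i), map_zero, zero_mul]
    · refine sum_subset (range_subset_range.2 (by omega)) fun i hi hi' => ?_
      have hi : i = j + 1 := by rw [mem_range] at hi hi'; omega
      have hrho : rho α j = 0 := by simp [rho, show (j : ℕ) = n - 1 by omega, hlast]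
      simp only [f, hi, entry_succ_self, hrho, Complex.ofReal_zero, map_zero, zero_mul]
  have hsum : ((hessenbergU n α)ᴴ * hessenbergU n α) j j' = ∑ i ∈ range n, f i := by
    rw [mul_apply, ← Fin.sum_univ_eq_sum_range f n]
    simp only [conjTranspose_apply, hessenbergU_apply, f, starRingEnd_apply]
  rw [hsum, hcol, sum_conj_entry_mul_entry (Fin.le_def.mp hjj') fun l hl => hα l (by omega),
    one_apply]
  simp [Fin.ext_iff]

theorem stmt_8_general (n : ℕ) (hn : 0 < n) (α : ℕ → ℂ)
    (hα : ∀ j, j < n - 1 → ‖α j‖ < 1)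
    (hlast : ‖α (n - 1)‖ = 1)
    (lam : Fin n → ℂ) (hmod : ∀ j, ‖lam j‖ = 1)
    (hdist : Function.Injective lam)
    (q : Fin n → ℝ) (hq : ∀ j, 0 < q j)
    (hev : ∀ k, ∃ v : Fin n → ℂ,
      (∑ i, ‖v i‖ ^ 2 = 1) ∧
      (hessenbergU n α).mulVec v = lam k • v ∧
      ‖v ⟨0, hn⟩‖ = q k) :
    ∏ i, ∏ j ∈ Ioi i, ‖lam i - lam j‖ ^ 2
      = (∏ l ∈ range (n - 1), (1 - ‖α l‖ ^ 2) ^ (n - 1 - l)) /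
          ∏ j, q j ^ 2 := by
  have hα_le : ∀ l < n, ‖α l‖ ≤ 1 := fun l hl => by
    rcases (by omega : l < n - 1 ∨ l = n - 1) with h | rfl
    exacts [(hα l h).le, hlast.le]
  have hH := hessenbergU_mem_unitaryGroup hα_le hlast
  choose v hv_norm hv_eigen hv_first using hev
  have hV := transpose_mem_unitaryGroup_of_mulVec_eq_smul hH hmod hdist hv_norm hv_eigen
  have hdet := norm_det_krylov hV (mul_transpose_eq_transpose_mul_diagonal hv_eigen) ⟨0, hn⟩
  rw [(hessenbergU_isUpperHessenberg n α).det_krylov hn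
    (s := fun j => (hessenbergU.rho α j : ℂ)) (hessenbergU_apply_of_succ_eq α)] at hdet
  simp only [transpose_apply, of_apply, hv_first, norm_prod, norm_pow, Complex.norm_real,
    Real.norm_of_nonneg (hessenbergU.rho_nonneg α _)] at hdet
  rw [← hessenbergU.prod_rho_pow_sq fun l hl => (hα l hl).le, hdet,
    eq_div_iff (prod_pos fun j _ => pow_pos (hq j) 2).ne']
  simp only [mul_pow, prod_pow, norm_sub_rev]
  ring

/-- For the unitary Hessenberg matrix `H(α₀,…,α_{n-1})` with eigenvalues
`λ₁,…,λₙ` on the unit circle and `q_j > 0` the modulus of the first component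
of the `j`-th normalized eigenvector, one has
`∏_{i<j} |λ_i - λ_j|² = ∏_{l=0}^{n-2} (1-|α_l|²)^{n-1-l} / ∏ q_j²`. -/
theorem stmt_8 (n : ℕ) (hn : 0 < n) (α : ℕ → ℂ)
    (hα : ∀ j, j < n - 1 → ‖α j‖ < 1)
    (hlast : ‖α (n - 1)‖ = 1)
    (lam : Fin n → ℂ) (hmod : ∀ j, ‖lam j‖ = 1)
    (hdist : Function.Injective lam)
    (q : Fin n → ℝ) (hq : ∀ j, 0 < q j) (hq1 : ∑ j, q j ^ 2 = 1)
    (hev : ∀ k, ∃ v : Fin n → ℂ,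
      (∑ i, ‖v i‖ ^ 2 = 1) ∧
      (hessenbergU n α).mulVec v = lam k • v ∧
      ‖v ⟨0, hn⟩‖ = q k) :
    ∏ i, ∏ j ∈ Ioi i, ‖lam i - lam j‖ ^ 2
      = (∏ l ∈ range (n - 1), (1 - ‖α l‖ ^ 2) ^ (n - 1 - l)) /
          ∏ j, q j ^ 2 :=
  stmt_8_general n hn α hα hlast lam hmod hdist q hq hev
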